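/- arXiv:1710.09115 — 3 statements merged into one kernel-verified Lean document; each statement's English description precedes it below -/
import Mathlib

section
/- Let X be a real-valued random variable with E X = 0, E X² = σ² < ∞, and E|X|³ < ∞, let T be a real-valued integrable random variable independent of X, let s ∈ ℝ, and let f: ℝ → ℝ be differentiable with f' Lipschitz with constant C (so ‖f''‖_∞ ≤ C). Then |E[σ² f'(s + X + T) − X f(s + X + T)]| ≤ (3/2) C E|X|³. -/
open MeasureTheory ProbabilityTheory Real

/-!
Write `Y = s + T`. Taylor-expanding `f` and `f'` around `Y` splits the integrand into a remainder
bounded by `σ² C |X| + (C / 2) |X|³` and the term `σ² f'(Y) - X f(Y) - X² f'(Y)`, whose mean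
vanishes because `X` is centred with second moment `σ²` and independent of `Y`. Since
`σ² E|X| ≤ E|X|³`, the remainder has mean at most `(3 / 2) C E|X|³`.
-/

section Taylor

variable {f : ℝ → ℝ} {C : ℝ}

lemma abs_sub_sub_mul_deriv_le_of_abs_deriv_sub_le (hf : Differentiable ℝ f)
    (hC : ∀ x y, |deriv f x - deriv f y| ≤ C * |x - y|) (y x : ℝ) :
    |f (y + x) - f y - x * deriv f y| ≤ C / 2 * x ^ 2 := by
  have hC0 : 0 ≤ C := by simpa using (abs_nonneg _).trans (hC 1 0)
  have hcont : Continuous (deriv f) :=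
    (LipschitzWith.of_dist_le' (K := C) (by simpa only [Real.dist_eq] using hC)).continuous
  have hrepr : f (y + x) - f y - x * deriv f y = ∫ t in y..y + x, (deriv f t - deriv f y) := by
    rw [intervalIntegral.integral_sub (hcont.intervalIntegrable _ _) intervalIntegrable_const,
      intervalIntegral.integral_deriv_eq_sub (fun t _ => hf t) (hcont.intervalIntegrable _ _)]
    simp
  have hint : ∫ t in Set.uIoc y (y + x), |t - y| = x ^ 2 / 2 := by
    have h := integral_pow_abs_sub_uIoc (a := y) (b := y + x) (n := 1)
    norm_num at h
    exact h
  rw [hrepr, ← Real.norm_eq_abs]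
  calc ‖∫ t in y..y + x, (deriv f t - deriv f y)‖ ≤ |(∫ t in y..y + x, C * |t - y|)| :=
        intervalIntegral.norm_integral_le_abs_of_norm_le (ae_of_all _ fun t => hC t y)
          ((by fun_prop : Continuous fun t => C * |t - y|).intervalIntegrable _ _)
    _ = C / 2 * x ^ 2 := by
        rw [intervalIntegral.abs_intervalIntegral_eq, integral_const_mul, hint,
          abs_of_nonneg (by positivity)]
        ring

lemma abs_stein_remainder_le (hf : Differentiable ℝ f)
    (hC : ∀ x y, |deriv f x - deriv f y| ≤ C * |x - y|) {σ2 : ℝ} (hσ2 : 0 ≤ σ2) (y x : ℝ) :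
    |σ2 * (deriv f (y + x) - deriv f y) - x * (f (y + x) - f y - x * deriv f y)|
      ≤ σ2 * C * |x| + C / 2 * |x| ^ 3 := by
  have h1 : |σ2 * (deriv f (y + x) - deriv f y)| ≤ σ2 * C * |x| := by
    rw [abs_mul, abs_of_nonneg hσ2, mul_assoc]
    simpa using mul_le_mul_of_nonneg_left (hC (y + x) y) hσ2
  have h2 : |x * (f (y + x) - f y - x * deriv f y)| ≤ C / 2 * |x| ^ 3 := by
    rw [abs_mul]
    calc |x| * _ ≤ |x| * (C / 2 * x ^ 2) :=
          mul_le_mul_of_nonneg_left (abs_sub_sub_mul_deriv_le_of_abs_deriv_sub_le hf hC y x)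
            (abs_nonneg x)
      _ = C / 2 * |x| ^ 3 := by rw [← sq_abs]; ring
  exact (abs_sub _ _).trans (add_le_add h1 h2)

end Taylor

section Stein

variable {Ω : Type*} [MeasurableSpace Ω] {μ : Measure Ω}

lemma integral_sq_mul_integral_abs_le
    [IsProbabilityMeasure μ] {X : Ω → ℝ} (hX : Integrable X μ)
    (hX2 : Integrable (fun ω => X ω ^ 2) μ) (hX3 : Integrable (fun ω => |X ω| ^ 3) μ) :
    (∫ ω, X ω ^ 2 ∂μ) * ∫ ω, |X ω| ∂μ ≤ ∫ ω, |X ω| ^ 3 ∂μ := by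
  set m := ∫ ω, |X ω| ∂μ
  have hm : 0 ≤ m := integral_nonneg fun _ => abs_nonneg _
  -- tangent line of `a ↦ a² m - a³` at `a = m`: the gap is `(a - m)² (a + m) ≥ 0`
  have key : ∀ ω, X ω ^ 2 * m ≤ |X ω| ^ 3 - m ^ 2 * (|X ω| - m) := fun ω => by
    rw [← sq_abs]
    nlinarith [mul_nonneg (sq_nonneg (|X ω| - m)) (add_nonneg (abs_nonneg (X ω)) hm)]
  have hlin : Integrable (fun ω => m ^ 2 * (|X ω| - m)) μ :=
    (hX.abs.sub (integrable_const m)).const_mul _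
  calc (∫ ω, X ω ^ 2 ∂μ) * m = ∫ ω, X ω ^ 2 * m ∂μ := (integral_mul_const _ _).symm
    _ ≤ ∫ ω, (|X ω| ^ 3 - m ^ 2 * (|X ω| - m)) ∂μ :=
        integral_mono (hX2.mul_const _) (hX3.sub hlin) key
    _ = ∫ ω, |X ω| ^ 3 ∂μ := by
        rw [integral_sub hX3 hlin, integral_const_mul, integral_sub hX.abs (integrable_const m)]
        simp [m]

lemma integral_stein_eq_zero_of_indepFun {X Y : Ω → ℝ} (hX : Integrable X μ)
    (hXmean : ∫ ω, X ω ∂μ = 0) (hX2 : Integrable (fun ω => X ω ^ 2) μ) (hY : AEMeasurable Y μ)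
    (hindep : IndepFun X Y μ) {g h : ℝ → ℝ} (hg : Measurable g) (hh : Measurable h)
    (hgY : Integrable (fun ω => g (Y ω)) μ)
    (hstein : Integrable (fun ω =>
      (∫ ω', X ω' ^ 2 ∂μ) * g (Y ω) - X ω * h (Y ω) - X ω ^ 2 * g (Y ω)) μ) :
    ∫ ω, ((∫ ω', X ω' ^ 2 ∂μ) * g (Y ω) - X ω * h (Y ω) - X ω ^ 2 * g (Y ω)) ∂μ = 0 := by
  set σ2 := ∫ ω, X ω ^ 2 ∂μ
  have hX2gY : Integrable (fun ω => X ω ^ 2 * g (Y ω)) μ :=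
    (hindep.comp (measurable_id.pow_const 2) hg).integrable_mul hX2 hgY
  have hhY : Integrable (fun ω => X ω * h (Y ω)) μ :=
    (((hgY.const_mul σ2).sub hX2gY).sub hstein).congr
      (ae_of_all _ fun ω => by simp only [Pi.sub_apply]; ring)
  have hXhY : ∫ ω, X ω * h (Y ω) ∂μ = 0 := by
    rw [hindep.integral_fun_comp_mul_comp (f := fun x => x) hX.aemeasurable hY
      aestronglyMeasurable_id hh.aestronglyMeasurable, hXmean, zero_mul]
  have hX2gY_eq : ∫ ω, X ω ^ 2 * g (Y ω) ∂μ = σ2 * ∫ ω, g (Y ω) ∂μ :=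
    hindep.integral_fun_comp_mul_comp (f := fun x => x ^ 2) hX.aemeasurable hY
      (continuous_pow 2).aestronglyMeasurable hg.aestronglyMeasurable
  have hσgY_sub_XhY : Integrable (fun ω => σ2 * g (Y ω) - X ω * h (Y ω)) μ :=
    (hgY.const_mul _).sub hhY
  rw [integral_sub hσgY_sub_XhY hX2gY, integral_sub (hgY.const_mul _) hhY,
    integral_const_mul, hXhY, hX2gY_eq]
  ring

lemma abs_integral_stein_le_of_indepFun [IsProbabilityMeasure μ] {X Y : Ω → ℝ}
    (hX : Integrable X μ) (hXmean : ∫ ω, X ω ∂μ = 0) (hX2 : Integrable (fun ω => X ω ^ 2) μ)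
    (hX3 : Integrable (fun ω => |X ω| ^ 3) μ) (hY : AEMeasurable Y μ) (hindep : IndepFun X Y μ)
    {f : ℝ → ℝ} (hf : Differentiable ℝ f) {C : ℝ}
    (hC : ∀ x y, |deriv f x - deriv f y| ≤ C * |x - y|)
    (hf'W : Integrable (fun ω => deriv f (Y ω + X ω)) μ)
    (hfW : Integrable (fun ω => X ω * f (Y ω + X ω)) μ) :
    |∫ ω, ((∫ ω', X ω' ^ 2 ∂μ) * deriv f (Y ω + X ω) - X ω * f (Y ω + X ω)) ∂μ|
      ≤ 3 / 2 * C * ∫ ω, |X ω| ^ 3 ∂μ := by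
  set σ2 := ∫ ω, X ω ^ 2 ∂μ
  have hσ2 : 0 ≤ σ2 := integral_nonneg fun ω => sq_nonneg (X ω)
  have hC0 : 0 ≤ C := by simpa using (abs_nonneg _).trans (hC 1 0)
  have hfm : Measurable f := hf.continuous.measurable
  have hf'm : Measurable (deriv f) := measurable_deriv f
  have hXm : AEMeasurable X μ := hX.aemeasurable
  set R : Ω → ℝ := fun ω => σ2 * (deriv f (Y ω + X ω) - deriv f (Y ω)) -
    X ω * (f (Y ω + X ω) - f (Y ω) - X ω * deriv f (Y ω))
  have hbound : Integrable (fun ω => σ2 * C * |X ω| + C / 2 * |X ω| ^ 3) μ :=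
    (hX.abs.const_mul _).add (hX3.const_mul _)
  have hR : Integrable R μ :=
    hbound.mono' (by fun_prop : AEMeasurable R μ).aestronglyMeasurable
      (ae_of_all _ fun ω => abs_stein_remainder_le hf hC hσ2 (Y ω) (X ω))
  have hf'Y : Integrable (fun ω => deriv f (Y ω)) μ := by
    have hdiff : Integrable (fun ω => deriv f (Y ω + X ω) - deriv f (Y ω)) μ :=
      (hX.abs.const_mul C).mono' (by fun_prop : AEMeasurable _ μ).aestronglyMeasurable
        (ae_of_all _ fun ω => by simpa using hC (Y ω + X ω) (Y ω))
    exact (hf'W.sub hdiff).congr (ae_of_all _ fun ω => by simp)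
  have hsplit : ∀ ω, σ2 * deriv f (Y ω + X ω) - X ω * f (Y ω + X ω) =
      R ω + (σ2 * deriv f (Y ω) - X ω * f (Y ω) - X ω ^ 2 * deriv f (Y ω)) := fun ω => by
    simp only [R]; ring
  have hstein : Integrable (fun ω =>
      σ2 * deriv f (Y ω) - X ω * f (Y ω) - X ω ^ 2 * deriv f (Y ω)) μ :=
    (((hf'W.const_mul σ2).sub hfW).sub hR).congr
      (ae_of_all _ fun ω => by simp only [Pi.sub_apply]; linarith [hsplit ω])
  calc |∫ ω, (σ2 * deriv f (Y ω + X ω) - X ω * f (Y ω + X ω)) ∂μ| = |∫ ω, R ω ∂μ| := by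
        simp_rw [hsplit]
        rw [integral_add hR hstein,
          integral_stein_eq_zero_of_indepFun hX hXmean hX2 hY hindep hf'm hfm hf'Y hstein, add_zero]
    _ ≤ ∫ ω, (σ2 * C * |X ω| + C / 2 * |X ω| ^ 3) ∂μ :=
        abs_integral_le_integral_abs.trans <| integral_mono hR.abs hbound
          fun ω => abs_stein_remainder_le hf hC hσ2 (Y ω) (X ω)
    _ = σ2 * C * ∫ ω, |X ω| ∂μ + C / 2 * ∫ ω, |X ω| ^ 3 ∂μ := by
        rw [integral_add (hX.abs.const_mul _) (hX3.const_mul _), integral_const_mul,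
          integral_const_mul]
    _ ≤ 3 / 2 * C * ∫ ω, |X ω| ^ 3 ∂μ := by
        nlinarith [mul_le_mul_of_nonneg_left (integral_sq_mul_integral_abs_le hX hX2 hX3) hC0]

end Stein

theorem stein_taylor_step_estimate_general
    {Ω : Type*} [MeasurableSpace Ω] {μ : Measure Ω} [IsProbabilityMeasure μ]
    (X T : Ω → ℝ) (hTm : Measurable T)
    (hX1 : Integrable X μ) (hXmean : (∫ ω, X ω ∂μ) = 0)
    (σ2 : ℝ) (hX2 : Integrable (fun ω => (X ω) ^ 2) μ)
    (hXvar : (∫ ω, (X ω) ^ 2 ∂μ) = σ2)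
    (hX3 : Integrable (fun ω => |X ω| ^ 3) μ)
    (hindep : IndepFun X T μ)
    (s : ℝ) (f : ℝ → ℝ) (hf : Differentiable ℝ f)
    (C : ℝ) (hC : ∀ x y : ℝ, |deriv f x - deriv f y| ≤ C * |x - y|)
    -- all expectations are assumed to exist:
    (hintf' : Integrable (fun ω => deriv f (s + X ω + T ω)) μ)
    (hintf : Integrable (fun ω => X ω * f (s + X ω + T ω)) μ) :
    |∫ ω, (σ2 * deriv f (s + X ω + T ω) - X ω * f (s + X ω + T ω)) ∂μ|
      ≤ (3 / 2) * C * ∫ ω, |X ω| ^ 3 ∂μ := by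
  subst hXvar
  have hY : AEMeasurable (fun ω => s + T ω) μ := (measurable_const.add hTm).aemeasurable
  have hindepY : IndepFun X (fun ω => s + T ω) μ :=
    hindep.comp measurable_id (measurable_const_add s)
  have hW : ∀ ω, s + X ω + T ω = (s + T ω) + X ω := fun ω => by ring
  simp only [hW] at hintf' hintf ⊢
  exact abs_integral_stein_le_of_indepFun hX1 hXmean hX2 hX3 hY hindepY hf hC hintf' hintf

/-- Per-step Stein–Taylor estimate (display (13) in Röllin): if `E X = 0`, `E X² = σ²`,
`E|X|³ < ∞`, `T` is independent of `X`, and `f'` is Lipschitz with constant `C`, then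
`|E[σ² f'(s + X + T) − X f(s + X + T)]| ≤ (3/2) C E|X|³`. -/
theorem stein_taylor_step_estimate
    {Ω : Type*} [MeasurableSpace Ω] {μ : Measure Ω} [IsProbabilityMeasure μ]
    (X T : Ω → ℝ) (hXm : Measurable X) (hTm : Measurable T)
    (hX1 : Integrable X μ) (hXmean : (∫ ω, X ω ∂μ) = 0)
    (σ2 : ℝ) (hX2 : Integrable (fun ω => (X ω) ^ 2) μ)
    (hXvar : (∫ ω, (X ω) ^ 2 ∂μ) = σ2)
    (hX3 : Integrable (fun ω => |X ω| ^ 3) μ)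
    (hT : Integrable T μ)
    (hindep : IndepFun X T μ)
    (s : ℝ) (f : ℝ → ℝ) (hf : Differentiable ℝ f)
    (C : ℝ) (hC : ∀ x y : ℝ, |deriv f x - deriv f y| ≤ C * |x - y|)
    -- all expectations are assumed to exist:
    (hintf' : Integrable (fun ω => deriv f (s + X ω + T ω)) μ)
    (hintf : Integrable (fun ω => X ω * f (s + X ω + T ω)) μ) :
    |∫ ω, (σ2 * deriv f (s + X ω + T ω) - X ω * f (s + X ω + T ω)) ∂μ|
      ≤ (3 / 2) * C * ∫ ω, |X ω| ^ 3 ∂μ :=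
  stein_taylor_step_estimate_general X T hTm hX1 hXmean σ2 hX2 hXvar hX3 hindep s f hf C hC hintf'
    hintf
end

section
/- For any real-valued random variable X and any ε ≥ 0, if the Wasserstein distance satisfies d_W(L(X), N(0,1)) ≤ ε, then the Kolmogorov distance satisfies d_K(L(X), N(0,1)) ≤ ε^{1/2}. -/
/-!
Sandwich `δ • 1_{(-∞, x]}` between the 1-Lipschitz ramps that fall linearly from `δ` to `0` on
`[x, x + δ]` and on `[x - δ, x]`. Testing the Wasserstein bound on a ramp costs `ε`, and trading a
ramp for the indicator under `N(0,1)` costs at most `δ² / (2√(2π))`, because the standard normal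
density is bounded by `1/√(2π)`. Hence `δ |F(x) - Φ(x)| ≤ ε + δ² / (2√(2π))` for every `δ > 0`,
and the optimal `δ` gives `|F(x) - Φ(x)| ≤ (2/π)^{1/4} √ε ≤ √ε`.
-/

open MeasureTheory ProbabilityTheory Real Set
open scoped ENNReal NNReal

noncomputable def ramp (a b t : ℝ) : ℝ := max 0 (min (b - a) (b - t))

lemma lipschitzWith_ramp (a b : ℝ) : LipschitzWith 1 (ramp a b) := by
  have : LipschitzWith 1 (fun t : ℝ => b - t) := by
    simpa using (LipschitzWith.const b).sub LipschitzWith.id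
  exact (this.const_min _).const_max _

lemma ramp_eq_indicator_Iic_add {a b : ℝ} (hab : a ≤ b) :
    ramp a b = (Iic a).indicator (fun _ => b - a) + (Ioc a b).indicator (fun t => b - t) := by
  ext t
  simp only [ramp, Pi.add_apply, indicator, mem_Iic, mem_Ioc]
  split_ifs <;> grind

lemma indicator_Iic_eq_ramp_add {a b : ℝ} (hab : a ≤ b) :
    (Iic b).indicator (fun _ => b - a) = ramp a b + (Ioc a b).indicator (fun t => t - a) := by
  ext t
  simp only [ramp, Pi.add_apply, indicator, mem_Iic, mem_Ioc]
  split_ifs <;> grind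

lemma integral_indicator_Ioc_const_sub {a b : ℝ} (hab : a ≤ b) :
    ∫ t, (Ioc a b).indicator (fun t => b - t) t = (b - a) ^ 2 / 2 := by
  rw [integral_indicator measurableSet_Ioc, ← intervalIntegral.integral_of_le hab,
    intervalIntegral.integral_sub intervalIntegrable_const intervalIntegral.intervalIntegrable_id,
    intervalIntegral.integral_const, integral_id, smul_eq_mul]
  ring

lemma integral_indicator_Ioc_sub_const {a b : ℝ} (hab : a ≤ b) :
    ∫ t, (Ioc a b).indicator (fun t => t - a) t = (b - a) ^ 2 / 2 := by
  rw [integral_indicator measurableSet_Ioc, ← intervalIntegral.integral_of_le hab,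
    intervalIntegral.integral_sub intervalIntegral.intervalIntegrable_id intervalIntegrable_const,
    intervalIntegral.integral_const, integral_id, smul_eq_mul]
  ring

lemma integrable_indicator_Ioc {f : ℝ → ℝ} (hf : Continuous f) (a b : ℝ) :
    Integrable ((Ioc a b).indicator f) :=
  hf.integrableOn_Ioc.integrable_indicator measurableSet_Ioc

lemma integral_le_mul_integral_of_le_smul_volume {ν : Measure ℝ} {c : ℝ≥0}
    (hν : ν ≤ (c : ℝ≥0∞) • volume) {f : ℝ → ℝ} (hf0 : 0 ≤ f) (hf : Integrable f) :
    ∫ t, f t ∂ν ≤ c * ∫ t, f t := by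
  have hfc : Integrable f ((c : ℝ≥0∞) • volume) := hf.smul_measure ENNReal.coe_ne_top
  calc ∫ t, f t ∂ν ≤ ∫ t, f t ∂((c : ℝ≥0∞) • volume) :=
        integral_mono_measure hν (ae_of_all _ hf0) hfc
    _ = c * ∫ t, f t := by rw [integral_smul_measure, ENNReal.coe_toReal, smul_eq_mul]

lemma MeasureTheory.Integrable.of_le_smul_volume {ν : Measure ℝ} {c : ℝ≥0}
    (hν : ν ≤ (c : ℝ≥0∞) • volume) {f : ℝ → ℝ} (hf : Integrable f) : Integrable f ν :=
  (hf.smul_measure ENNReal.coe_ne_top).mono_measure hν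

lemma integrable_ramp (ν : Measure ℝ) [IsFiniteMeasure ν] {a b : ℝ} (hab : a ≤ b) :
    Integrable (ramp a b) ν :=
  .of_bound (lipschitzWith_ramp a b).continuous.aestronglyMeasurable (b - a) <|
    ae_of_all _ fun t => by
      rw [Real.norm_eq_abs, abs_of_nonneg (le_max_left _ _)]
      exact max_le (sub_nonneg.2 hab) (min_le_left _ _)

lemma integral_indicator_Iic_const (ν : Measure ℝ) (a δ : ℝ) :
    ∫ t, (Iic a).indicator (fun _ => δ) t ∂ν = δ * ν.real (Iic a) := by
  rw [integral_indicator_const _ measurableSet_Iic, smul_eq_mul, mul_comm]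

section RampComparison

variable {ρ ν : Measure ℝ} [IsFiniteMeasure ρ] [IsFiniteMeasure ν] {c : ℝ≥0}
  {a b ε : ℝ}

lemma mul_measureReal_Iic_left_le (hν : ν ≤ (c : ℝ≥0∞) • volume) (hab : a ≤ b)
    (hρν : ∫ t, ramp a b t ∂ρ ≤ ∫ t, ramp a b t ∂ν + ε) :
    (b - a) * ρ.real (Iic a) ≤ (b - a) * ν.real (Iic a) + c * (b - a) ^ 2 / 2 + ε := by
  have htri : Integrable ((Ioc a b).indicator fun t => b - t) :=
    integrable_indicator_Ioc (continuous_const.sub continuous_id) a b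
  have hρ_ramp : (b - a) * ρ.real (Iic a) ≤ ∫ t, ramp a b t ∂ρ := by
    rw [← integral_indicator_Iic_const]
    refine integral_mono ((integrable_const _).indicator measurableSet_Iic)
      (integrable_ramp ρ hab) ?_
    rw [ramp_eq_indicator_Iic_add hab]
    exact le_add_of_nonneg_right (indicator_nonneg (fun t ht => sub_nonneg.2 ht.2))
  have hν_ramp : ∫ t, ramp a b t ∂ν ≤ (b - a) * ν.real (Iic a) + c * (b - a) ^ 2 / 2 := by
    rw [ramp_eq_indicator_Iic_add hab,
      integral_add' ((integrable_const _).indicator measurableSet_Iic) (htri.of_le_smul_volume hν),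
      integral_indicator_Iic_const, mul_div_assoc, ← integral_indicator_Ioc_const_sub hab]
    gcongr
    exact integral_le_mul_integral_of_le_smul_volume hν
      (indicator_nonneg (fun t ht => sub_nonneg.2 ht.2)) htri
  linarith

lemma mul_measureReal_Iic_right_le (hν : ν ≤ (c : ℝ≥0∞) • volume) (hab : a ≤ b)
    (hνρ : ∫ t, ramp a b t ∂ν ≤ ∫ t, ramp a b t ∂ρ + ε) :
    (b - a) * ν.real (Iic b) ≤ (b - a) * ρ.real (Iic b) + c * (b - a) ^ 2 / 2 + ε := by
  have htri : Integrable ((Ioc a b).indicator fun t => t - a) :=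
    integrable_indicator_Ioc (continuous_id.sub continuous_const) a b
  have hρ_ramp : ∫ t, ramp a b t ∂ρ ≤ (b - a) * ρ.real (Iic b) := by
    rw [← integral_indicator_Iic_const]
    refine integral_mono (integrable_ramp ρ hab)
      ((integrable_const _).indicator measurableSet_Iic) ?_
    rw [indicator_Iic_eq_ramp_add hab]
    exact le_add_of_nonneg_right (indicator_nonneg (fun t ht => sub_nonneg.2 ht.1.le))
  have hν_ramp : (b - a) * ν.real (Iic b) ≤ ∫ t, ramp a b t ∂ν + c * (b - a) ^ 2 / 2 := by
    rw [← integral_indicator_Iic_const, indicator_Iic_eq_ramp_add hab,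
      integral_add' (integrable_ramp ν hab) (htri.of_le_smul_volume hν), mul_div_assoc,
      ← integral_indicator_Ioc_sub_const hab]
    gcongr
    exact integral_le_mul_integral_of_le_smul_volume hν
      (indicator_nonneg (fun t ht => sub_nonneg.2 ht.1.le)) htri
  linarith

end RampComparison

lemma le_sqrt_of_forall_mul_le {a c ε : ℝ} (hc : 0 < c)
    (h : ∀ δ > 0, δ * a ≤ ε + c * δ ^ 2 / 2) : a ≤ √(2 * c * ε) := by
  rcases le_or_gt a 0 with ha | ha
  · exact ha.trans (sqrt_nonneg _)
  · refine le_sqrt_of_sq_le ?_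
    have := h (a / c) (by positivity)
    field_simp at this
    nlinarith

theorem abs_measureReal_Iic_sub_le_sqrt {ρ ν : Measure ℝ} [IsFiniteMeasure ρ] [IsFiniteMeasure ν]
    {c : ℝ≥0} (hc : 0 < c) (hν : ν ≤ (c : ℝ≥0∞) • volume) {ε : ℝ}
    (hW : ∀ h : ℝ → ℝ, LipschitzWith 1 h → |∫ t, h t ∂ρ - ∫ t, h t ∂ν| ≤ ε) (x : ℝ) :
    |ρ.real (Iic x) - ν.real (Iic x)| ≤ √(2 * c * ε) := by
  refine le_sqrt_of_forall_mul_le hc fun δ hδ => ?_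
  have hup := mul_measureReal_Iic_left_le (ρ := ρ) hν (le_add_of_nonneg_right hδ.le)
    (sub_le_iff_le_add'.1 (abs_le.1 (hW _ (lipschitzWith_ramp x (x + δ)))).2)
  have hlo := mul_measureReal_Iic_right_le (ρ := ρ) hν (sub_le_self x hδ.le)
    (neg_le_sub_iff_le_add.1 (abs_le.1 (hW _ (lipschitzWith_ramp (x - δ) x))).1)
  rw [add_sub_cancel_left] at hup
  rw [sub_sub_cancel] at hlo
  rcases abs_cases (ρ.real (Iic x) - ν.real (Iic x)) with ⟨h, -⟩ | ⟨h, -⟩ <;> rw [h] <;> linarith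

lemma gaussianPDFReal_le_inv_sqrt (μ : ℝ) (v : ℝ≥0) (x : ℝ) :
    gaussianPDFReal μ v x ≤ (√(2 * π * v))⁻¹ := by
  refine mul_le_of_le_one_right (by positivity) (exp_le_one_iff.2 ?_)
  exact div_nonpos_of_nonpos_of_nonneg (neg_nonpos.2 (sq_nonneg _)) (by positivity)

lemma gaussianReal_le_smul_volume (μ : ℝ) {v : ℝ≥0} (hv : v ≠ 0) :
    gaussianReal μ v ≤ ENNReal.ofReal (√(2 * π * v))⁻¹ • volume := by
  rw [gaussianReal_of_var_ne_zero μ hv, ← withDensity_const]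
  exact withDensity_mono <|
    ae_of_all _ fun x => ENNReal.ofReal_le_ofReal (gaussianPDFReal_le_inv_sqrt μ v x)

theorem kolmogorov_le_sqrt_wasserstein_general
    {Ω : Type*} [MeasurableSpace Ω] {μ : Measure Ω} [IsProbabilityMeasure μ]
    (X : Ω → ℝ) (hXm : Measurable X)
    (ε : ℝ) (hε : 0 ≤ ε)
    (hW : ∀ h : ℝ → ℝ, LipschitzWith 1 h →
      |(∫ ω, h (X ω) ∂μ) - ∫ x, h x ∂(gaussianReal 0 1)| ≤ ε) :
    ∀ x : ℝ, |(μ {ω | X ω ≤ x}).toReal - ((gaussianReal 0 1) (Set.Iic x)).toReal|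
      ≤ Real.sqrt ε := by
  intro x
  have hlaw : ∀ h : ℝ → ℝ, LipschitzWith 1 h →
      |∫ t, h t ∂(μ.map X) - ∫ t, h t ∂(gaussianReal 0 1)| ≤ ε := fun h hh => by
    rw [integral_map hXm.aemeasurable hh.continuous.aestronglyMeasurable]
    exact hW h hh
  have hc : (0 : ℝ) < (√(2 * π * (1 : ℝ≥0)))⁻¹ := by positivity
  have hbound := abs_measureReal_Iic_sub_le_sqrt (Real.toNNReal_pos.2 hc)
    (gaussianReal_le_smul_volume 0 one_ne_zero) hlaw x
  rw [measureReal_def, measureReal_def, Measure.map_apply hXm measurableSet_Iic,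
    Real.coe_toNNReal _ hc.le] at hbound
  refine hbound.trans (sqrt_le_sqrt (mul_le_of_le_one_left hε ?_))
  rw [← div_eq_mul_inv, div_le_one (by positivity), NNReal.coe_one, mul_one,
    le_sqrt zero_le_two (by positivity)]
  linarith [pi_gt_three]

/-- If `d_W(L(X), N(0,1)) ≤ ε` then `d_K(L(X), N(0,1)) ≤ √ε`: a Wasserstein bound (tested
against all 1-Lipschitz functions) implies a Kolmogorov bound of the square-rooted order. -/
theorem kolmogorov_le_sqrt_wasserstein
    {Ω : Type*} [MeasurableSpace Ω] {μ : Measure Ω} [IsProbabilityMeasure μ]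
    (X : Ω → ℝ) (hXm : Measurable X) (hX1 : Integrable X μ)
    (ε : ℝ) (hε : 0 ≤ ε)
    (hW : ∀ h : ℝ → ℝ, LipschitzWith 1 h →
      |(∫ ω, h (X ω) ∂μ) - ∫ x, h x ∂(gaussianReal 0 1)| ≤ ε) :
    ∀ x : ℝ, |(μ {ω | X ω ≤ x}).toReal - ((gaussianReal 0 1) (Set.Iic x)).toReal|
      ≤ Real.sqrt ε :=
  kolmogorov_le_sqrt_wasserstein_general X hXm ε hε hW
end

section
/- Assume V_n² = s_n² almost surely with s_n > 0, and assume there exist constants β and δ such that E(|X_k|³ | F_{k-1}) ≤ min(β, δσ_k²) almost surely for all 1 ≤ k ≤ n. Then Σ_{k=1}^n E[ |X_k|³/(ρ_k² + s_n²/n) ] ≤ δ n (s_n²/n + β^{2/3}) (1 + log n) / s_n². -/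
open MeasureTheory ProbabilityTheory Real Finset

private lemma telescope_log_aux (b : ℕ → ℝ) (n : ℕ) (hpos : ∀ k, k ≤ n → 0 < b k)
    (hmono : ∀ k, k < n → b (k + 1) ≤ b k) :
    ∑ j ∈ Finset.range n, (b j - b (j + 1)) / b j ≤ Real.log (b 0) - Real.log (b n) := by
  induction n with
  | zero => simp
  | succ n ih =>
    have h1 := ih (fun k hk => hpos k (hk.trans (Nat.le_succ n)))
      (fun k hk => hmono k (hk.trans (Nat.lt_succ_self n)))
    have hbn : 0 < b n := hpos n (Nat.le_succ n)
    have hbn1 : 0 < b (n + 1) := hpos (n + 1) le_rfl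
    have hlog := Real.log_le_sub_one_of_pos (show (0:ℝ) < b (n+1) / b n by positivity)
    rw [Real.log_div hbn1.ne' hbn.ne'] at hlog
    have h2 : (b n - b (n + 1)) / b n = 1 - b (n + 1) / b n := by field_simp
    rw [Finset.sum_range_succ]
    linarith

/-- Summed third-moment estimate in the proof of Corollary 2 (Röllin): if `V_n² = s_n²` a.s.
and `E(|X_k|³|F_{k-1}) ≤ min(β, δσ_k²)` a.s., then
`∑_{k=1}^n E[|X_k|³/(ρ_k² + s_n²/n)] ≤ δ n (s_n²/n + β^{2/3})(1 + log n)/s_n²`. -/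
theorem sum_third_moment_tail_estimate
    {Ω : Type*} [m : MeasurableSpace Ω] {μ : Measure Ω} [IsProbabilityMeasure μ]
    (n : ℕ) (hn : 1 ≤ n)
    (ℱ : Filtration ℕ m)
    (X : ℕ → Ω → ℝ)
    -- martingale difference sequence:
    (hadp : ∀ k, 1 ≤ k → k ≤ n → StronglyMeasurable[ℱ k] (X k))
    (hint : ∀ k, 1 ≤ k → k ≤ n → Integrable (X k) μ)
    (hmds : ∀ k, 1 ≤ k → k ≤ n → μ[X k | ℱ (k - 1)] =ᵐ[μ] 0)
    -- finite third moments: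
    (hX3 : ∀ k, 1 ≤ k → k ≤ n → Integrable (fun ω => |X k ω| ^ 3) μ)
    -- conditional variances σ_k² = E(X_k²|F_{k-1}):
    (σ2 : ℕ → Ω → ℝ)
    (hσ2 : ∀ k, σ2 k = μ[fun ω => (X k ω) ^ 2 | ℱ (k - 1)])
    -- s_n² = ∑ E X_i²:
    (sn : ℝ) (hsn : 0 < sn)
    (hsn2 : sn ^ 2 = ∑ i ∈ Icc 1 n, ∫ ω, (X i ω) ^ 2 ∂μ)
    -- assumption V_n² = s_n² a.s.:
    (hV : ∀ᵐ ω ∂μ, (∑ i ∈ Icc 1 n, σ2 i ω) = sn ^ 2)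
    -- conditional third moment bound E(|X_k|³|F_{k-1}) ≤ β ∧ δσ_k²:
    (β δ : ℝ)
    (hβδ : ∀ k, 1 ≤ k → k ≤ n →
      μ[fun ω => |X k ω| ^ 3 | ℱ (k - 1)] ≤ᵐ[μ] fun ω => min β (δ * σ2 k ω)) :
    ∑ k ∈ Icc 1 n, (∫ ω, |X k ω| ^ 3 / ((∑ i ∈ Icc k n, σ2 i ω) + sn ^ 2 / n) ∂μ)
      ≤ δ * n * (sn ^ 2 / n + β ^ ((2 : ℝ) / 3)) * (1 + Real.log n) / sn ^ 2 := by
  classical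
  haveI : (MeasureTheory.ae μ).NeBot := ae_neBot.mpr (IsProbabilityMeasure.ne_zero μ)
  have hn' : (0:ℝ) < n := by exact_mod_cast hn
  have hn1 : (1:ℝ) ≤ n := by exact_mod_cast hn
  set A : ℝ := sn ^ 2 / n with hAdef
  have hA : 0 < A := by positivity
  have hσnn : ∀ k, ∀ᵐ ω ∂μ, 0 ≤ σ2 k ω := fun k => by
    rw [hσ2 k]
    exact condExp_nonneg (Filter.Eventually.of_forall fun ω => sq_nonneg _)
  have hgood : ∀ᵐ ω ∂μ, (∀ i, 0 ≤ σ2 i ω) ∧ (∑ i ∈ Icc 1 n, σ2 i ω) = sn ^ 2 :=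
    (ae_all_iff.mpr hσnn).and hV
  have hmin_nn : ∀ k, 1 ≤ k → k ≤ n → ∀ᵐ ω ∂μ, 0 ≤ min β (δ * σ2 k ω) := fun k h1 h2 => by
    filter_upwards [hβδ k h1 h2,
      condExp_nonneg (μ := μ) (m := ℱ (k - 1)) (f := fun ω => |X k ω| ^ 3)
        (Filter.Eventually.of_forall fun ω => by positivity)] with ω h h0
    exact h0.trans h
  have hβ0 : 0 ≤ β := by
    obtain ⟨ω, hω⟩ := (hmin_nn 1 le_rfl hn).exists
    exact hω.trans (min_le_left _ _)
  have hδ0 : 0 ≤ δ := by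
    by_contra hneg
    push_neg at hneg
    have hall : ∀ᵐ ω ∂μ, ∀ k ∈ Icc 1 n, 0 ≤ min β (δ * σ2 k ω) :=
      (Filter.eventually_all_finset _).mpr
        (fun k hk => hmin_nn k (mem_Icc.mp hk).1 (mem_Icc.mp hk).2)
    have hFalse : ∀ᵐ ω ∂μ, False := by
      filter_upwards [hall, hgood] with ω h1 h2
      obtain ⟨hpos, hsum⟩ := h2
      have hz : ∀ k ∈ Icc 1 n, σ2 k ω = 0 := by
        intro k hk
        have ha := (h1 k hk).trans (min_le_right _ _)
        have hb := hpos k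
        nlinarith
      rw [Finset.sum_eq_zero hz] at hsum
      nlinarith
    obtain ⟨ω, hω⟩ := hFalse.exists
    exact hω
  -- key per-k estimate
  have key : ∀ k, 1 ≤ k → k ≤ n →
      Integrable (fun ω => (sn ^ 2 - (∑ i ∈ Icc 1 (k - 1), σ2 i ω) + A)⁻¹ * (δ * σ2 k ω)) μ ∧
      (∫ ω, |X k ω| ^ 3 / ((∑ i ∈ Icc k n, σ2 i ω) + A) ∂μ)
        ≤ ∫ ω, (sn ^ 2 - (∑ i ∈ Icc 1 (k - 1), σ2 i ω) + A)⁻¹ * (δ * σ2 k ω) ∂μ := by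
    rintro k hk1 hkn
    obtain ⟨k', rfl⟩ : ∃ k', k = k' + 1 := ⟨k - 1, by omega⟩
    have hk'n : k' ≤ n := by omega
    simp only [Nat.add_sub_cancel]
    set c : Ω → ℝ := fun ω => (sn ^ 2 - (∑ i ∈ Icc 1 k', σ2 i ω) + A)⁻¹ with hcdef
    have hm := ℱ.le k'
    -- strong measurability of c wrt ℱ k'
    have hc_sm : StronglyMeasurable[ℱ k'] c := by
      refine Measurable.stronglyMeasurable ?_
      refine Measurable.inv ?_
      refine Measurable.add_const ?_ A
      refine Measurable.const_sub ?_ _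
      refine Finset.measurable_sum _ ?_
      intro i hi
      have hi' : i - 1 ≤ k' := by
        have := (mem_Icc.mp hi).2; omega
      exact ((hσ2 i ▸ stronglyMeasurable_condExp).mono (ℱ.mono hi')).measurable
    -- splitting of the sum
    have hsplit : ∀ ω, (∑ i ∈ Icc 1 n, σ2 i ω) = sn ^ 2 →
        (∑ i ∈ Icc (k' + 1) n, σ2 i ω) = sn ^ 2 - ∑ i ∈ Icc 1 k', σ2 i ω := by
      intro ω hsum
      have h := Finset.sum_Ioc_consecutive (fun i => σ2 i ω) (Nat.zero_le k') hk'n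
      have e1 : Icc 1 n = Ioc 0 n := Finset.Icc_add_one_left_eq_Ioc 0 n
      have e2 : Icc 1 k' = Ioc 0 k' := Finset.Icc_add_one_left_eq_Ioc 0 k'
      have e3 : Icc (k' + 1) n = Ioc k' n := Finset.Icc_add_one_left_eq_Ioc k' n
      rw [e1] at hsum
      rw [e2, e3]
      linarith
    -- a.e. bounds on c and the denominator identity
    have hcA : ∀ᵐ ω ∂μ, 0 ≤ c ω ∧ c ω ≤ A⁻¹ ∧
        (∑ i ∈ Icc (k' + 1) n, σ2 i ω) + A = sn ^ 2 - (∑ i ∈ Icc 1 k', σ2 i ω) + A := by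
      filter_upwards [hgood] with ω hg
      obtain ⟨hpos, hsum⟩ := hg
      have hle : (∑ i ∈ Icc 1 k', σ2 i ω) ≤ ∑ i ∈ Icc 1 n, σ2 i ω :=
        Finset.sum_le_sum_of_subset_of_nonneg (Finset.Icc_subset_Icc_right hk'n)
          (fun i _ _ => hpos i)
      rw [hsum] at hle
      have hDA : A ≤ sn ^ 2 - (∑ i ∈ Icc 1 k', σ2 i ω) + A := by linarith
      refine ⟨inv_nonneg.mpr (by linarith), inv_anti₀ hA hDA, by
        rw [hsplit ω hsum]⟩
    set Y : Ω → ℝ := fun ω => |X (k' + 1) ω| ^ 3 with hYdef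
    have hX3' : Integrable Y μ := hX3 (k' + 1) hk1 hkn
    have hXc_int : Integrable (c * Y) μ := by
      refine Integrable.mono' (hX3'.const_mul A⁻¹)
        (((hc_sm.mono hm).aestronglyMeasurable).mul hX3'.aestronglyMeasurable) ?_
      filter_upwards [hcA] with ω hw
      obtain ⟨h0, h1, -⟩ := hw
      show ‖c ω * Y ω‖ ≤ A⁻¹ * Y ω
      have hY0 : (0:ℝ) ≤ Y ω := by rw [hYdef]; positivity
      rw [Real.norm_eq_abs, abs_mul, abs_of_nonneg h0, abs_of_nonneg hY0]
      exact mul_le_mul_of_nonneg_right h1 hY0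
    have hσint : Integrable (σ2 (k' + 1)) μ := hσ2 (k' + 1) ▸ integrable_condExp
    have hcσ_int : Integrable (fun ω => c ω * (δ * σ2 (k' + 1) ω)) μ := by
      refine Integrable.mono' ((hσint.abs.const_mul (A⁻¹ * δ)))
        (((hc_sm.mono hm).aestronglyMeasurable).mul
          (hσint.aestronglyMeasurable.const_mul δ)) ?_
      filter_upwards [hcA] with ω hw
      obtain ⟨h0, h1, -⟩ := hw
      rw [Real.norm_eq_abs, abs_mul, abs_mul, abs_of_nonneg h0, abs_of_nonneg hδ0]
      calc c ω * (δ * |σ2 (k' + 1) ω|)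
          ≤ A⁻¹ * (δ * |σ2 (k' + 1) ω|) :=
            mul_le_mul_of_nonneg_right h1 (by positivity)
        _ = A⁻¹ * δ * |σ2 (k' + 1) ω| := by ring
    have hpull : μ[c * Y | ℱ k'] =ᵐ[μ] c * μ[Y | ℱ k'] :=
      condExp_mul_of_stronglyMeasurable_left hc_sm hXc_int hX3'
    have hmain : ∫ ω, (c * Y) ω ∂μ
        ≤ ∫ ω, c ω * (δ * σ2 (k' + 1) ω) ∂μ := by
      have h1 : ∫ ω, (c * Y) ω ∂μ = ∫ ω, (μ[c * Y | ℱ k']) ω ∂μ :=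
        (integral_condExp hm).symm
      rw [h1, integral_congr_ae hpull]
      refine integral_mono_ae (integrable_condExp.congr hpull) hcσ_int ?_
      filter_upwards [hβδ (k' + 1) hk1 hkn, hcA] with ω hb hw
      obtain ⟨h0, -, -⟩ := hw
      show c ω * (μ[Y | ℱ k']) ω ≤ c ω * (δ * σ2 (k' + 1) ω)
      exact mul_le_mul_of_nonneg_left (hb.trans (min_le_right _ _)) h0
    refine ⟨hcσ_int, ?_⟩
    calc ∫ ω, |X (k' + 1) ω| ^ 3 / ((∑ i ∈ Icc (k' + 1) n, σ2 i ω) + A) ∂μ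
        = ∫ ω, (c * Y) ω ∂μ := by
          refine integral_congr_ae ?_
          filter_upwards [hcA] with ω hw
          obtain ⟨-, -, heq⟩ := hw
          show |X (k' + 1) ω| ^ 3 / ((∑ i ∈ Icc (k' + 1) n, σ2 i ω) + A) = c ω * Y ω
          rw [heq, div_eq_inv_mul]
      _ ≤ _ := hmain
  -- summation
  have hsum_le : ∑ k ∈ Icc 1 n, (∫ ω, |X k ω| ^ 3 / ((∑ i ∈ Icc k n, σ2 i ω) + A) ∂μ)
      ≤ ∫ ω, ∑ k ∈ Icc 1 n,
          (sn ^ 2 - (∑ i ∈ Icc 1 (k - 1), σ2 i ω) + A)⁻¹ * (δ * σ2 k ω) ∂μ := by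
    rw [integral_finset_sum _ (fun k hk => (key k (mem_Icc.mp hk).1 (mem_Icc.mp hk).2).1)]
    exact Finset.sum_le_sum fun k hk => (key k (mem_Icc.mp hk).1 (mem_Icc.mp hk).2).2
  have htel : ∫ ω, ∑ k ∈ Icc 1 n,
        (sn ^ 2 - (∑ i ∈ Icc 1 (k - 1), σ2 i ω) + A)⁻¹ * (δ * σ2 k ω) ∂μ
      ≤ δ * Real.log ((n : ℝ) + 1) := by
    have hconst : ∫ (_ : Ω), δ * Real.log ((n : ℝ) + 1) ∂μ = δ * Real.log ((n : ℝ) + 1) := by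
      simp
    rw [← hconst]
    refine integral_mono_ae
      (integrable_finset_sum _
        (fun k hk => (key k (mem_Icc.mp hk).1 (mem_Icc.mp hk).2).1))
      (integrable_const _) ?_
    filter_upwards [hgood] with ω hg
    obtain ⟨hpos, hsum⟩ := hg
    set b : ℕ → ℝ := fun j => sn ^ 2 - (∑ i ∈ Icc 1 j, σ2 i ω) + A with hbdef
    have hble : ∀ j, j ≤ n → A ≤ b j := by
      intro j hj
      have hle : (∑ i ∈ Icc 1 j, σ2 i ω) ≤ ∑ i ∈ Icc 1 n, σ2 i ω :=
        Finset.sum_le_sum_of_subset_of_nonneg (Finset.Icc_subset_Icc_right hj)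
          (fun i _ _ => hpos i)
      rw [hsum] at hle
      simp only [hbdef]
      linarith
    have hbpos : ∀ j, j ≤ n → 0 < b j := fun j hj => lt_of_lt_of_le hA (hble j hj)
    have hbmono : ∀ j, j < n → b (j + 1) ≤ b j := by
      intro j hj
      have hs := Finset.sum_Icc_succ_top (Nat.succ_le_succ (Nat.zero_le j)) (fun i => σ2 i ω)
      show sn ^ 2 - (∑ i ∈ Icc 1 (j + 1), σ2 i ω) + A
          ≤ sn ^ 2 - (∑ i ∈ Icc 1 j, σ2 i ω) + A
      rw [hs]
      have := hpos (j + 1)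
      linarith
    have hkey : ∑ k ∈ Icc 1 n, (sn ^ 2 - (∑ i ∈ Icc 1 (k - 1), σ2 i ω) + A)⁻¹ * (δ * σ2 k ω)
        = ∑ j ∈ Finset.range n, δ * ((b j - b (j + 1)) / b j) := by
      rw [← Finset.Ico_add_one_right_eq_Icc, Finset.sum_Ico_eq_sum_range]
      refine Finset.sum_congr (by norm_num) ?_
      intro j hj
      have hidx : 1 + j - 1 = j := by omega
      have hσval : σ2 (1 + j) ω = b j - b (j + 1) := by
        have hs := Finset.sum_Icc_succ_top (Nat.succ_le_succ (Nat.zero_le j)) (fun i => σ2 i ω)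
        show σ2 (1 + j) ω = (sn ^ 2 - (∑ i ∈ Icc 1 j, σ2 i ω) + A)
            - (sn ^ 2 - (∑ i ∈ Icc 1 (j + 1), σ2 i ω) + A)
        rw [add_comm 1 j, hs]
        ring
      rw [hidx, hσval]
      show (b j)⁻¹ * (δ * (b j - b (j + 1))) = δ * ((b j - b (j + 1)) / b j)
      rw [div_eq_inv_mul]
      ring
    rw [hkey, ← Finset.mul_sum]
    have htl := telescope_log_aux b n hbpos hbmono
    have hb0 : b 0 = sn ^ 2 + A := by simp [hbdef]
    have hbn : b n = A := by
      show sn ^ 2 - (∑ i ∈ Icc 1 n, σ2 i ω) + A = A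
      rw [hsum]; ring
    have hsnne : sn ≠ 0 := ne_of_gt hsn
    have hnne : (n : ℝ) ≠ 0 := ne_of_gt hn'
    have hlogval : Real.log (b 0) - Real.log (b n) = Real.log ((n : ℝ) + 1) := by
      rw [hb0, hbn, ← Real.log_div (by positivity) (ne_of_gt hA)]
      congr 1
      rw [hAdef]
      field_simp
    calc δ * ∑ j ∈ Finset.range n, (b j - b (j + 1)) / b j
        ≤ δ * (Real.log (b 0) - Real.log (b n)) := mul_le_mul_of_nonneg_left htl hδ0
      _ = δ * Real.log ((n : ℝ) + 1) := by rw [hlogval]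
  -- final numeric comparison
  have hB : 0 ≤ β ^ ((2 : ℝ) / 3) := Real.rpow_nonneg hβ0 _
  have hL : 0 ≤ Real.log n := Real.log_nonneg hn1
  have hlog1 : Real.log ((n : ℝ) + 1) ≤ 1 + Real.log n := by
    have h2n : ((n : ℝ) + 1) ≤ 2 * n := by linarith
    calc Real.log ((n : ℝ) + 1) ≤ Real.log (2 * n) :=
          Real.log_le_log (by positivity) h2n
      _ = Real.log 2 + Real.log n := Real.log_mul two_ne_zero (by positivity)
      _ ≤ 1 + Real.log n := by nlinarith [Real.log_two_lt_d9]
  have hnA : (n : ℝ) * A = sn ^ 2 := by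
    rw [hAdef]; field_simp
  have hfin : δ * Real.log ((n : ℝ) + 1)
      ≤ δ * n * (A + β ^ ((2 : ℝ) / 3)) * (1 + Real.log n) / sn ^ 2 := by
    rw [le_div_iff₀ (by positivity : (0:ℝ) < sn ^ 2)]
    calc δ * Real.log ((n : ℝ) + 1) * sn ^ 2
        ≤ δ * (1 + Real.log n) * sn ^ 2 :=
          mul_le_mul_of_nonneg_right
            (mul_le_mul_of_nonneg_left hlog1 hδ0) (sq_nonneg sn)
      _ = δ * ((n : ℝ) * A) * (1 + Real.log n) := by rw [hnA]; ring
      _ ≤ δ * (n : ℝ) * (A + β ^ ((2 : ℝ) / 3)) * (1 + Real.log n) := by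
          nlinarith [mul_nonneg (mul_nonneg (mul_nonneg hδ0 hn'.le) hB)
            (show (0:ℝ) ≤ 1 + Real.log n by linarith)]
  exact le_trans (le_trans hsum_le htel) hfin
end
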